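/- For parameters β' < 1 and γ ∈ ℝ, the partial sum ∑_{k=1}^{n} k^{-β'} log(k+1)^γ is asymptotically equivalent, as n → ∞, to n^{1-β'} log(n)^γ / (1 - β'). -/

import Mathlib

/-!
Stolz–Cesàro with `G x = x ^ a * log x ^ γ / a`, `a = 1 - β'`. By the mean value theorem
`G (k + 1) - G k = G' ξₖ` with `ξₖ ∈ (k, k + 1)`, and
`G' x = x ^ (-β') * log x ^ γ * (1 + γ / (a * log x)) ~ x ^ (-β') * log x ^ γ`; since `ξₖ ~ k`,
the increments of `G` are equivalent to the summands. They are eventually positive and `G → ∞`,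
so the partial sums are equivalent to `G n`.
-/

open Asymptotics Filter Real Finset

section

variable {α : Type*} {l : Filter α}

theorem Asymptotics.IsEquivalent.rpow_of_eventually_nonneg {u v : α → ℝ} (h : u ~[l] v)
    (hv : ∀ᶠ x in l, 0 ≤ v x) (r : ℝ) : u ^ r ~[l] v ^ r := by
  have hv' : v =ᶠ[l] fun x => max (v x) 0 := hv.mono fun x hx => (max_eq_left hx).symm
  refine ((h.congr_right hv').rpow fun x => le_max_right _ _).congr_right ?_
  filter_upwards [hv'] with x hx
  change max (v x) 0 ^ r = v x ^ r
  rw [← hx]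

theorem Asymptotics.isEquivalent_of_eventually_abs_sub_le {u v : α → ℝ} {C : ℝ}
    (h : ∀ᶠ x in l, |u x - v x| ≤ C) (hv : Tendsto v l atTop) : u ~[l] v :=
  IsLittleO.isEquivalent <|
    (IsBigO.of_bound C (h.mono fun x hx => by simpa using hx)).trans_isLittleO
      (isLittleO_one_left_iff ℝ |>.2 (tendsto_norm_atTop_atTop.comp hv))

theorem Asymptotics.IsEquivalent.rpow_mul_log_rpow {u w v : α → ℝ} (hu : u ~[l] v)
    (hw : w ~[l] v) (hv : Tendsto v l atTop) (p q : ℝ) :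
    (fun x => u x ^ p * Real.log (w x) ^ q) ~[l] fun x => v x ^ p * Real.log (v x) ^ q :=
  (hu.rpow_of_eventually_nonneg (hv.eventually_ge_atTop 0) p).mul
    ((hw.log hv).rpow_of_eventually_nonneg
      ((tendsto_log_atTop.comp hv).eventually_ge_atTop 0) q)

end

theorem Asymptotics.IsEquivalent.sum_range {f g : ℕ → ℝ} (h : f ~[atTop] g)
    (hg : ∀ᶠ k in atTop, 0 ≤ g k) (h'g : Tendsto (fun n => ∑ i ∈ range n, g i) atTop atTop) :
    (fun n => ∑ i ∈ range n, f i) ~[atTop] fun n => ∑ i ∈ range n, g i := by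
  obtain ⟨N, hN⟩ := eventually_atTop.1 hg
  -- `Asymptotics.IsLittleO.sum_range` needs `0 ≤ g` everywhere; `|g|` has it, and its partial
  -- sums differ from those of `g` by an eventually constant amount.
  have habs : (fun n => ∑ i ∈ range n, |g i|) ~[atTop] fun n => ∑ i ∈ range n, g i := by
    refine (IsEquivalent.refl.add_const_of_norm_tendsto_atTop
      (c := ∑ i ∈ range N, (|g i| - g i)) (tendsto_norm_atTop_atTop.comp h'g)).congr_left ?_
    filter_upwards [eventually_ge_atTop N] with n hn
    rw [← eventually_constant_sum (fun i hi => by simp [abs_of_nonneg (hN i hi)]) hn,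
      sum_sub_distrib, add_sub_cancel]
  have hsum := (h.isLittleO.trans_isBigO (isBigO_abs_right.2 (isBigO_refl g atTop))).sum_range
    (fun i => abs_nonneg (g i))
    (tendsto_atTop_mono (fun n => sum_le_sum fun i _ => le_abs_self (g i)) h'g)
  refine IsLittleO.isEquivalent ((hsum.trans_isEquivalent habs).congr_left fun n => ?_)
  simp [sum_sub_distrib]

theorem Asymptotics.IsEquivalent.sum_range_of_sub {f G : ℕ → ℝ}
    (h : f ~[atTop] fun k => G (k + 1) - G k) (hmono : ∀ᶠ k in atTop, G k ≤ G (k + 1))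
    (hG : Tendsto G atTop atTop) : (fun n => ∑ i ∈ range n, f i) ~[atTop] G := by
  have htel : (fun n => ∑ i ∈ range n, (G (i + 1) - G i)) ~[atTop] G := by
    simp only [sum_range_sub]
    exact IsEquivalent.refl.add_const_of_norm_tendsto_atTop (tendsto_norm_atTop_atTop.comp hG)
  exact (h.sum_range (hmono.mono fun k hk => sub_nonneg.2 hk)
    (htel.symm.tendsto_atTop hG)).trans htel

theorem Real.hasDerivAt_rpow_mul_log_rpow (p q : ℝ) {x : ℝ} (hx : 1 < x) :
    HasDerivAt (fun x => x ^ p * log x ^ q) (x ^ (p - 1) * log x ^ q * (p + q / log x)) x := by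
  have hx0 : x ≠ 0 := by positivity
  have hlog : log x ≠ 0 := (log_pos hx).ne'
  refine ((hasDerivAt_rpow_const (p := p) (Or.inl hx0)).mul
    ((hasDerivAt_log hx0).rpow_const (p := q) (Or.inl hlog))).congr_deriv ?_
  rw [rpow_sub_one hx0, rpow_sub_one hlog]
  field_simp

theorem Real.tendsto_rpow_mul_log_rpow_atTop {p : ℝ} (hp : 0 < p) (q : ℝ) :
    Tendsto (fun x => x ^ p * log x ^ q) atTop atTop := by
  have hpos : ∀ᶠ x in atTop, 0 < log x ^ (-q) / x ^ p := by
    filter_upwards [eventually_gt_atTop 1] with x hx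
    have := log_pos hx
    positivity
  have h := (tendsto_nhdsWithin_iff.2
    ⟨(isLittleO_log_rpow_rpow_atTop (-q) hp).tendsto_div_nhds_zero, hpos⟩).inv_tendsto_nhdsGT_zero
  refine h.congr' ?_
  filter_upwards [eventually_gt_atTop 1] with x hx
  rw [Pi.inv_apply, inv_div, rpow_neg (log_pos hx).le, div_inv_eq_mul]

theorem Real.isEquivalent_rpow_mul_log_rpow_sub {p : ℝ} (hp : p ≠ 0) (q : ℝ) :
    (fun x => (x + 1) ^ p * log (x + 1) ^ q - x ^ p * log x ^ q) ~[atTop]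
      fun x => p * x ^ (p - 1) * log x ^ q := by
  have hmvt : ∀ x : ℝ, ∃ ξ, 2 ≤ x → x < ξ ∧ ξ < x + 1 ∧
      (x + 1) ^ p * log (x + 1) ^ q - x ^ p * log x ^ q =
        ξ ^ (p - 1) * log ξ ^ q * (p + q / log ξ) := by
    intro x
    by_cases hx : 2 ≤ x
    · have hderiv : ∀ y ∈ Set.Icc x (x + 1), HasDerivAt (fun x => x ^ p * log x ^ q)
          (y ^ (p - 1) * log y ^ q * (p + q / log y)) y :=
        fun y hy => hasDerivAt_rpow_mul_log_rpow p q (by linarith [hy.1])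
      obtain ⟨ξ, hξ, hslope⟩ := exists_hasDerivAt_eq_slope _ _ (lt_add_one x)
        (fun y hy => (hderiv y hy).continuousAt.continuousWithinAt)
        (fun y hy => hderiv y (Set.Ioo_subset_Icc_self hy))
      exact ⟨ξ, fun _ => ⟨hξ.1, hξ.2, by rw [hslope, add_sub_cancel_left, div_one]⟩⟩
    · exact ⟨0, fun h => absurd h hx⟩
  choose ξ hξ using hmvt
  have hξ_id : ξ ~[atTop] id := by
    refine isEquivalent_of_eventually_abs_sub_le (C := 1) ?_ tendsto_id
    filter_upwards [eventually_ge_atTop 2] with x hx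
    obtain ⟨h₁, h₂, -⟩ := hξ x hx
    rw [abs_le, id]
    constructor <;> linarith
  have hfactor : (fun x => p + q / log (ξ x)) ~[atTop] fun _ => p :=
    (isEquivalent_const_iff_tendsto hp).2 <| by
      simpa using tendsto_const_nhds.add (tendsto_const_nhds.div_atTop
        (tendsto_log_atTop.comp (hξ_id.symm.tendsto_atTop tendsto_id)))
  calc _ =ᶠ[atTop] fun x => ξ x ^ (p - 1) * log (ξ x) ^ q * (p + q / log (ξ x)) := by
        filter_upwards [eventually_ge_atTop 2] with x hx
        exact (hξ x hx).2.2
    _ ~[atTop] fun x => x ^ (p - 1) * log x ^ q * p :=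
        (hξ_id.rpow_mul_log_rpow hξ_id tendsto_id _ _).mul hfactor
    _ = _ := by ext x; ring

/-- Partial sum `∑_{k=1}^n k^{-β'} log(k+1)^γ` is asymptotically `n^{1-β'} log(n)^γ / (1-β')`. -/
theorem partial_sum_asymptotic (β' γ : ℝ) (hβ' : β' < 1) :
    Tendsto (fun n : ℕ =>
      (∑ k ∈ Finset.Icc 1 n, (k : ℝ) ^ (-β') * Real.log ((k : ℝ) + 1) ^ γ) /
        ((n : ℝ) ^ (1 - β') * Real.log (n : ℝ) ^ γ / (1 - β')))
      atTop (nhds 1) := by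
  have ha : 0 < 1 - β' := sub_pos.2 hβ'
  have hcast : Tendsto (fun n : ℕ => (n : ℝ)) atTop atTop := tendsto_natCast_atTop_atTop
  set G : ℕ → ℝ := fun n => (n : ℝ) ^ (1 - β') * Real.log n ^ γ / (1 - β')
  have hG : Tendsto G atTop atTop :=
    ((tendsto_rpow_mul_log_rpow_atTop ha γ).comp hcast).atTop_div_const ha
  have hstep : (fun k => G (k + 1) - G k) ~[atTop]
      fun k : ℕ => (k : ℝ) ^ (-β') * Real.log k ^ γ := by
    refine ((((isEquivalent_rpow_mul_log_rpow_sub ha.ne' γ).comp_tendsto hcast).div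
      (IsEquivalent.refl (u := fun _ => 1 - β'))).congr_left ?_).congr_right ?_
    all_goals refine Eventually.of_forall fun k => ?_
    · simp only [G, Function.comp_apply, Pi.div_apply, Nat.cast_add_one]
      ring
    · simp only [Function.comp_apply, Pi.div_apply, sub_sub_cancel_left]
      field_simp
  have hterm : (fun k : ℕ => ((k + 1 : ℕ) : ℝ) ^ (-β') * Real.log (((k + 1 : ℕ) : ℝ) + 1) ^ γ)
      ~[atTop] fun k : ℕ => (k : ℝ) ^ (-β') * Real.log k ^ γ := by
    refine IsEquivalent.rpow_mul_log_rpow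
      (isEquivalent_of_eventually_abs_sub_le (C := 1) ?_ hcast)
      (isEquivalent_of_eventually_abs_sub_le (C := 2) ?_ hcast) hcast _ _ <;>
    exact Eventually.of_forall fun k => by push_cast; ring_nf; norm_num
  have hmono : ∀ᶠ k in atTop, G k ≤ G (k + 1) := by
    refine (hstep.eventually_pos ?_).mono fun k hk => (sub_pos.1 hk).le
    filter_upwards [hcast.eventually_gt_atTop 1] with k hk
    have := log_pos hk
    positivity
  have hsum := (hterm.trans hstep.symm).sum_range_of_sub hmono hG
  refine ((isEquivalent_iff_tendsto_one (hG.eventually_ne_atTop 0)).1 hsum).congr fun n => ?_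
  rw [Pi.div_apply, range_eq_Ico, ← Ico_add_one_right_eq_Icc]
  symm
  congr 1
  exact (sum_Ico_add' _ 0 n 1).symm
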